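/- The cochain Ψ̂ is a 3-cocycle of the Virasoro algebra V with values in the trivial module K (δ_3 Ψ̂ = 0), and Ψ̂ is not a 3-coboundary; hence Ψ̂ defines a non-trivial class in H^3(V, K). -/

import Mathlib

/-!
`δΨ̂` is multilinear, so it suffices to check `δΨ̂ = 0` on the basis `{t} ∪ {ê_n}`. When an
argument is the central element `t`, every term vanishes; on the `ê_n` the central part of the
bracket is killed by `Ψ̂(t, -, -) = 0`, and what remains is the cocycle identity of `Ψ` on the Witt
algebra, a polynomial identity in the indices. If `Ψ̂ = δφ`, evaluating at `(ê₂, ê₁, ê₋₃)` and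
`(ê₃, ê₋₁, ê₋₂)`, where no bracket has a central part, gives two linear relations among the values
`φ(ê_n, ê₋ₙ)` whose sum reads `40 = 0`.
-/

/-- `E : ℤ → V` together with the central element `t` realize `V` as the Virasoro
algebra over `K`: the `E n` together with `t` form a `K`-basis,
`⁅E n, E m⁆ = (m - n) • E (n + m) - (1/12)(n³ - n) δ_{n+m,0} • t` and `⁅E n, t⁆ = 0`. -/
def IsVirasoroAlgebra (K : Type*) {V : Type*} [Field K] [LieRing V] [LieAlgebra K V]
    (E : ℤ → V) (t : V) : Prop :=
  (∃ b : Module.Basis (Option ℤ) K V, b none = t ∧ ∀ n : ℤ, b (some n) = E n) ∧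
    (∀ n m : ℤ, ⁅E n, E m⁆ = (m - n) • E (n + m) +
      (if n + m = 0 then -((((n : K) ^ 3 - (n : K)) / 12)) else 0) • t) ∧
    ∀ n : ℤ, ⁅E n, t⁆ = 0

/-- The Chevalley–Eilenberg coboundary of a 2-cochain with values in the trivial module. -/
def lieD2 (K : Type*) {L : Type*} [Field K] [LieRing L] [LieAlgebra K L]
    (φ : AlternatingMap K L K (Fin 2)) (x₁ x₂ x₃ : L) : K :=
  φ ![⁅x₁, x₂⁆, x₃] - φ ![⁅x₁, x₃⁆, x₂] + φ ![⁅x₂, x₃⁆, x₁]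

/-- A 3-cochain with values in the trivial module `K` is a cocycle: `δ₃ ψ = 0`. -/
def IsLieCocycle3 (K : Type*) {L : Type*} [Field K] [LieRing L] [LieAlgebra K L]
    (ψ : AlternatingMap K L K (Fin 3)) : Prop :=
  ∀ x₁ x₂ x₃ x₄ : L,
    ψ ![⁅x₁, x₂⁆, x₃, x₄] - ψ ![⁅x₁, x₃⁆, x₂, x₄] + ψ ![⁅x₁, x₄⁆, x₂, x₃]
      + ψ ![⁅x₂, x₃⁆, x₁, x₄] - ψ ![⁅x₂, x₄⁆, x₁, x₃] + ψ ![⁅x₃, x₄⁆, x₁, x₂] = 0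

/-- A 3-cochain with values in the trivial module `K` is a coboundary: `ψ = δ₂ φ`. -/
def IsLieCoboundary3 (K : Type*) {L : Type*} [Field K] [LieRing L] [LieAlgebra K L]
    (ψ : AlternatingMap K L K (Fin 3)) : Prop :=
  ∃ φ : AlternatingMap K L K (Fin 2), ∀ x₁ x₂ x₃ : L,
    ψ ![x₁, x₂, x₃] = lieD2 K φ x₁ x₂ x₃

namespace AlternatingMap

variable {R M N : Type*} [CommSemiring R]

section AddCommMonoid

variable [AddCommMonoid M] [Module R M] [AddCommMonoid N] [Module R N] {n : ℕ}

theorem map_vecCons_vecCons_add (f : M [⋀^Fin (n + 2)]→ₗ[R] N) (m : Fin n → M) (x y z : M) :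
    f (Matrix.vecCons x (Matrix.vecCons (y + z) m)) =
      f (Matrix.vecCons x (Matrix.vecCons y m)) + f (Matrix.vecCons x (Matrix.vecCons z m)) :=
  (f.curryLeft x).map_vecCons_add m y z

theorem map_vecCons_vecCons_smul (f : M [⋀^Fin (n + 2)]→ₗ[R] N) (m : Fin n → M) (c : R)
    (x y : M) :
    f (Matrix.vecCons x (Matrix.vecCons (c • y) m)) =
      c • f (Matrix.vecCons x (Matrix.vecCons y m)) :=
  (f.curryLeft x).map_vecCons_smul m c y

theorem map_vecCons_vecCons_vecCons_add (f : M [⋀^Fin (n + 3)]→ₗ[R] N) (m : Fin n → M)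
    (w x y z : M) :
    f (Matrix.vecCons w (Matrix.vecCons x (Matrix.vecCons (y + z) m))) =
      f (Matrix.vecCons w (Matrix.vecCons x (Matrix.vecCons y m))) +
        f (Matrix.vecCons w (Matrix.vecCons x (Matrix.vecCons z m))) :=
  ((f.curryLeft w).curryLeft x).map_vecCons_add m y z

theorem map_vecCons_vecCons_vecCons_smul (f : M [⋀^Fin (n + 3)]→ₗ[R] N) (m : Fin n → M)
    (c : R) (w x y : M) :
    f (Matrix.vecCons w (Matrix.vecCons x (Matrix.vecCons (c • y) m))) =
      c • f (Matrix.vecCons w (Matrix.vecCons x (Matrix.vecCons y m))) :=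
  ((f.curryLeft w).curryLeft x).map_vecCons_smul m c y

end AddCommMonoid

section AddCommGroup

variable [AddCommMonoid M] [Module R M] [AddCommGroup N] [Module R N]

theorem map_fin_two_swap (f : M [⋀^Fin 2]→ₗ[R] N) (x y : M) : f ![y, x] = -f ![x, y] := by
  rw [← f.map_swap ![x, y] Fin.zero_ne_one]
  congr 1; ext i; fin_cases i <;> rfl

theorem map_fin_three_swap_one_two (f : M [⋀^Fin 3]→ₗ[R] N) (x y z : M) :
    f ![x, z, y] = -f ![x, y, z] := by
  rw [← f.map_swap ![x, y, z] (by decide : (1 : Fin 3) ≠ 2)]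
  congr 1; ext i; fin_cases i <;> rfl

theorem map_fin_three_swap_zero_two (f : M [⋀^Fin 3]→ₗ[R] N) (x y z : M) :
    f ![z, y, x] = -f ![x, y, z] := by
  rw [← f.map_swap ![x, y, z] (by decide : (0 : Fin 3) ≠ 2)]
  congr 1; ext i; fin_cases i <;> rfl

end AddCommGroup

theorem map_vecCons_zsmul [AddCommGroup M] [Module R M] [AddCommGroup N] [Module R N] {n : ℕ}
    (f : M [⋀^Fin (n + 1)]→ₗ[R] N) (m : Fin n → M) (c : ℤ) (x : M) :
    f (Matrix.vecCons (c • x) m) = c • f (Matrix.vecCons x m) :=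
  DFunLike.congr_fun (map_zsmul f.curryLeft c x) m

end AlternatingMap

section LieCochain

variable {K L : Type*} [Field K] [LieRing L] [LieAlgebra K L]

open AlternatingMap in
def lieCoboundary3 (ψ : L [⋀^Fin 3]→ₗ[K] K) : MultilinearMap K (fun _ : Fin 4 => L) K :=
  MultilinearMap.mk'
    (fun v => ψ ![⁅v 0, v 1⁆, v 2, v 3] - ψ ![⁅v 0, v 2⁆, v 1, v 3]
      + ψ ![⁅v 0, v 3⁆, v 1, v 2] + ψ ![⁅v 1, v 2⁆, v 0, v 3]
      - ψ ![⁅v 1, v 3⁆, v 0, v 2] + ψ ![⁅v 2, v 3⁆, v 0, v 1])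
    (fun m i x y => by
      fin_cases i <;>
        simp only [Fin.isValue, Fin.zero_eta, Fin.mk_one, Fin.reduceFinMk, ne_eq, Fin.reduceEq,
          one_ne_zero, zero_ne_one, not_false_eq_true, Function.update_self, Function.update_of_ne,
          add_lie, lie_add, map_vecCons_add, map_vecCons_vecCons_add,
          map_vecCons_vecCons_vecCons_add] <;>
        ring)
    (fun m i c x => by
      fin_cases i <;>
        simp only [Fin.isValue, Fin.zero_eta, Fin.mk_one, Fin.reduceFinMk, ne_eq, Fin.reduceEq,
          one_ne_zero, zero_ne_one, not_false_eq_true, Function.update_self, Function.update_of_ne,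
          smul_lie, lie_smul, map_vecCons_smul, map_vecCons_vecCons_smul,
          map_vecCons_vecCons_vecCons_smul, smul_eq_mul] <;>
        ring)

theorem lieCoboundary3_apply (ψ : L [⋀^Fin 3]→ₗ[K] K) (x₁ x₂ x₃ x₄ : L) :
    lieCoboundary3 ψ ![x₁, x₂, x₃, x₄] =
      ψ ![⁅x₁, x₂⁆, x₃, x₄] - ψ ![⁅x₁, x₃⁆, x₂, x₄] + ψ ![⁅x₁, x₄⁆, x₂, x₃]
        + ψ ![⁅x₂, x₃⁆, x₁, x₄] - ψ ![⁅x₂, x₄⁆, x₁, x₃] + ψ ![⁅x₃, x₄⁆, x₁, x₂] :=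
  rfl

theorem isLieCocycle3_iff_lieCoboundary3_eq_zero (ψ : L [⋀^Fin 3]→ₗ[K] K) :
    IsLieCocycle3 K ψ ↔ lieCoboundary3 ψ = 0 := by
  refine ⟨fun h => ?_, fun h x₁ x₂ x₃ x₄ => ?_⟩
  · ext v
    have hv : v = ![v 0, v 1, v 2, v 3] := by ext i; fin_cases i <;> rfl
    rw [hv, lieCoboundary3_apply]
    exact h _ _ _ _
  · rw [← lieCoboundary3_apply, h, zero_apply]

theorem isLieCocycle3_iff_of_basis {ι : Type*} (b : Module.Basis ι K L)
    (ψ : L [⋀^Fin 3]→ₗ[K] K) :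
    IsLieCocycle3 K ψ ↔ ∀ i j k l : ι, lieCoboundary3 ψ ![b i, b j, b k, b l] = 0 := by
  rw [isLieCocycle3_iff_lieCoboundary3_eq_zero]
  refine ⟨fun h i j k l => by rw [h, zero_apply], fun h => ?_⟩
  refine Module.Basis.ext_multilinear (fun _ => b) fun v => ?_
  have hv : (fun i => b (v i)) = ![b (v 0), b (v 1), b (v 2), b (v 3)] := by
    ext i; fin_cases i <;> rfl
  rw [hv, h, zero_apply]

variable {t : L}

theorem lieCoboundary3_eq_zero_of_central {ψ : L [⋀^Fin 3]→ₗ[K] K}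
    (ht : ∀ x : L, ⁅x, t⁆ = 0) (hψ : ∀ x y, ψ ![x, y, t] = 0) {v : Fin 4 → L} {i : Fin 4}
    (hi : v i = t) :
    lieCoboundary3 ψ v = 0 := by
  have ht' (x : L) : ⁅t, x⁆ = 0 := by rw [← lie_skew, ht, neg_zero]
  have hψ' (x y : L) : ψ ![x, t, y] = 0 := by rw [ψ.map_fin_three_swap_one_two, hψ, neg_zero]
  have hψ0 (x y : L) : ψ ![0, x, y] = 0 := ψ.map_coord_zero 0 rfl
  obtain ⟨x₁, x₂, x₃, x₄, rfl⟩ : ∃ x₁ x₂ x₃ x₄, v = ![x₁, x₂, x₃, x₄] :=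
    ⟨v 0, v 1, v 2, v 3, by ext i; fin_cases i <;> rfl⟩
  rw [lieCoboundary3_apply]
  fin_cases i <;>
    simp only [Fin.zero_eta, Fin.mk_one, Fin.reduceFinMk, Matrix.cons_val_zero,
      Matrix.cons_val_one, Matrix.cons_val] at hi <;>
    subst hi <;> simp [ht, ht', hψ, hψ', hψ0]

end LieCochain

def godbillonVey (i j k : ℤ) : ℤ := if i + j + k = 0 then (i - j) * (j - k) * (i - k) else 0

theorem godbillonVey_cocycle (a b c d : ℤ) :
    (b - a) * godbillonVey (a + b) c d - (c - a) * godbillonVey (a + c) b d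
      + (d - a) * godbillonVey (a + d) b c + (c - b) * godbillonVey (b + c) a d
      - (d - b) * godbillonVey (b + d) a c + (d - c) * godbillonVey (c + d) a b = 0 := by
  unfold godbillonVey
  -- each of the six conditions says `a + b + c + d = 0`
  split_ifs <;> first | omega | (obtain rfl : d = -a - b - c := (by omega); ring)

section Virasoro

variable {K V : Type*} [Field K] [LieRing V] [LieAlgebra K V] {E : ℤ → V}

theorem lieD2_apply_of_lie_eq (hE : ∀ n m : ℤ, n + m ≠ 0 → ⁅E n, E m⁆ = (m - n) • E (n + m))
    (φ : V [⋀^Fin 2]→ₗ[K] K) {a b c : ℤ} (hab : a + b ≠ 0) (hac : a + c ≠ 0) (hbc : b + c ≠ 0) :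
    lieD2 K φ (E a) (E b) (E c) =
      (b - a : ℤ) * φ ![E (a + b), E c] - (c - a : ℤ) * φ ![E (a + c), E b]
        + (c - b : ℤ) * φ ![E (b + c), E a] := by
  simp only [lieD2, hE a b hab, hE a c hac, hE b c hbc, φ.map_vecCons_zsmul, zsmul_eq_mul]

theorem not_isLieCoboundary3_of_godbillonVey [CharZero K]
    (hE : ∀ n m : ℤ, n + m ≠ 0 → ⁅E n, E m⁆ = (m - n) • E (n + m)) {Ψ : V [⋀^Fin 3]→ₗ[K] K}
    (hΨ : ∀ i j k : ℤ, Ψ ![E i, E j, E k] = godbillonVey i j k) :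
    ¬ IsLieCoboundary3 K Ψ := by
  rintro ⟨φ, hφ⟩
  have h₁ := hφ (E 2) (E 1) (E (-3))
  have h₂ := hφ (E 3) (E (-1)) (E (-2))
  rw [hΨ, lieD2_apply_of_lie_eq hE φ (by norm_num) (by norm_num) (by norm_num)] at h₁ h₂
  norm_num [godbillonVey, φ.map_fin_two_swap (E 1), φ.map_fin_two_swap (E 2),
    φ.map_fin_two_swap (E 3)] at h₁ h₂
  have : (40 : K) = 0 := by linear_combination h₁ + h₂
  norm_num at this

variable {t : V}

theorem IsVirasoroAlgebra.lie_central_eq_zero (hV : IsVirasoroAlgebra K E t) (x : V) :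
    ⁅x, t⁆ = 0 := by
  obtain ⟨⟨b, hbt, hbE⟩, -, hEt⟩ := hV
  have hadt : LieAlgebra.ad K V t = 0 := b.ext fun
    | none => by simp [hbt]
    | some n => by
      rw [LinearMap.zero_apply, LieAlgebra.ad_apply, hbE, ← lie_skew, hEt, neg_zero]
  rw [← lie_skew, ← LieAlgebra.ad_apply K, hadt, LinearMap.zero_apply, neg_zero]

theorem IsVirasoroAlgebra.lie_of_add_ne_zero (hV : IsVirasoroAlgebra K E t) {n m : ℤ}
    (h : n + m ≠ 0) : ⁅E n, E m⁆ = (m - n) • E (n + m) := by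
  rw [hV.2.1, if_neg h, zero_smul, add_zero]

theorem IsVirasoroAlgebra.cochain_apply_lie {Ψ : V [⋀^Fin 3]→ₗ[K] K}
    (hV : IsVirasoroAlgebra K E t)
    (hΨ : ∀ i j k : ℤ, Ψ ![E i, E j, E k] = godbillonVey i j k)
    (hΨt : ∀ x y, Ψ ![x, y, t] = 0) (a b c d : ℤ) :
    Ψ ![⁅E a, E b⁆, E c, E d] = ((b - a) * godbillonVey (a + b) c d : ℤ) := by
  rw [hV.2.1, Ψ.map_vecCons_add, Ψ.map_vecCons_zsmul, zsmul_eq_mul, Ψ.map_vecCons_smul,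
    Ψ.map_fin_three_swap_zero_two (E d) (E c) t, hΨt, neg_zero, smul_zero, add_zero, hΨ,
    Int.cast_mul]

theorem IsVirasoroAlgebra.lieCoboundary3_apply_eq_zero {Ψ : V [⋀^Fin 3]→ₗ[K] K}
    (hV : IsVirasoroAlgebra K E t)
    (hΨ : ∀ i j k : ℤ, Ψ ![E i, E j, E k] = godbillonVey i j k)
    (hΨt : ∀ x y, Ψ ![x, y, t] = 0) (a b c d : ℤ) :
    lieCoboundary3 Ψ ![E a, E b, E c, E d] = 0 := by
  simp only [lieCoboundary3_apply, hV.cochain_apply_lie hΨ hΨt, ← Int.cast_sub, ← Int.cast_add,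
    godbillonVey_cocycle, Int.cast_zero]

theorem IsVirasoroAlgebra.isLieCocycle3 {Ψ : V [⋀^Fin 3]→ₗ[K] K}
    (hV : IsVirasoroAlgebra K E t)
    (hΨ : ∀ i j k : ℤ, Ψ ![E i, E j, E k] = godbillonVey i j k)
    (hΨt : ∀ x y, Ψ ![x, y, t] = 0) : IsLieCocycle3 K Ψ := by
  obtain ⟨b, hbt, hbE⟩ := hV.1
  rw [isLieCocycle3_iff_of_basis b]
  have ht := hV.lie_central_eq_zero
  intro i j k l
  match i, j, k, l with
  | some a, some c, some d, some e =>
    simpa [hbE] using hV.lieCoboundary3_apply_eq_zero hΨ hΨt a c d e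
  | none, _, _, _ => exact lieCoboundary3_eq_zero_of_central ht hΨt (i := 0) hbt
  | _, none, _, _ => exact lieCoboundary3_eq_zero_of_central ht hΨt (i := 1) hbt
  | _, _, none, _ => exact lieCoboundary3_eq_zero_of_central ht hΨt (i := 2) hbt
  | _, _, _, none => exact lieCoboundary3_eq_zero_of_central ht hΨt (i := 3) hbt

end Virasoro

/-- the cochain `Ψ̂` (the trivial extension of the algebraic Godbillon–Vey
cocycle) is a 3-cocycle of the Virasoro algebra with values in the trivial module `K`,
and it is not a 3-coboundary. -/
theorem virasoro_godbillonVey_isCocycle_not_coboundary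
    {K V : Type*} [Field K] [CharZero K] [LieRing V] [LieAlgebra K V]
    (E : ℤ → V) (t : V) (hV : IsVirasoroAlgebra K E t)
    (Ψ : AlternatingMap K V K (Fin 3))
    (hΨ : ∀ i j k : ℤ, Ψ ![E i, E j, E k] =
      if i + j + k = 0 then (((i - j) * (j - k) * (i - k) : ℤ) : K) else 0)
    (hΨt : ∀ x y : V, Ψ ![x, y, t] = 0) :
    IsLieCocycle3 K Ψ ∧ ¬ IsLieCoboundary3 K Ψ := by
  have hGV (i j k : ℤ) : Ψ ![E i, E j, E k] = godbillonVey i j k := by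
    rw [hΨ, godbillonVey, Int.cast_ite, Int.cast_zero]
  exact ⟨hV.isLieCocycle3 hGV hΨt,
    not_isLieCoboundary3_of_godbillonVey (fun _ _ => hV.lie_of_add_ne_zero) hGV⟩
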